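/- Let h₁,…,hₙ > 0 with Σ h_k = 1, α₁ > … > αₙ in (0,1], H_k = Σ_{i≤k} h_i, and let S be a random variable in [0,1] with E[S] = Σ_k h_k α_k. If π_S(H_k) ≤ Σ_{i>k} h_i α_i for all k = 1,…,n−1, then π_S(t) ≤ π_{S̄}(t) for all t ∈ [0,1], i.e., S precedes the maximally convex distribution S̄ in the convex order. -/

import Mathlib

/-!
The stop-loss transform `π_S` of an integrable `S` is convex, while `π_{S̄}` is piecewise linear
with breakpoints `0 = H₀ < H₁ < ⋯ < Hₙ = 1`. Summation by parts, using that the masses of `S̄`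
at `H_k, …, H_n` add up to `α_k`, gives `π_{S̄}(H_k) = Σ_{i>k} h_i α_i`. This dominates `π_S(H_k)`:
by hypothesis for `0 < k < n`, because `π_S(0) = E[S]` for `k = 0`, and because `π_S(1) = 0`
for `k = n`. On each `[H_k, H_{k+1}]` the convex `π_S` lies below its chord, hence below the affine
`π_{S̄}` that dominates it at both ends.
-/

open MeasureTheory Finset

noncomputable def stopLoss {Ω : Type*} [MeasurableSpace Ω] (μ : Measure Ω) (X : Ω → ℝ) (t : ℝ) :
    ℝ :=
  ∫ ω, max (X ω - t) 0 ∂μ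

noncomputable def discreteStopLoss (p H : ℕ → ℝ) (n : ℕ) (t : ℝ) : ℝ :=
  ∑ j ∈ Finset.Iic n, p j * max (H j - t) 0

theorem sum_Icc_one_sub_sum_Icc_one {M : Type*} [AddCommGroup M] (f : ℕ → M) {j k : ℕ}
    (hjk : j ≤ k) : ∑ i ∈ Icc 1 k, f i - ∑ i ∈ Icc 1 j, f i = ∑ i ∈ Icc (j + 1) k, f i := by
  have hIcc (m : ℕ) : Icc 1 m = Ioc 0 m := Icc_add_one_left_eq_Ioc 0 m
  rw [hIcc, hIcc, Icc_add_one_left_eq_Ioc, sub_eq_iff_eq_add',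
    sum_Ioc_consecutive f (Nat.zero_le j) hjk]

theorem sum_Icc_mul_sum_Icc_comm {R : Type*} [CommSemiring R] (f g : ℕ → R) (a n : ℕ) :
    ∑ j ∈ Icc a n, f j * ∑ i ∈ Icc a j, g i = ∑ i ∈ Icc a n, g i * ∑ j ∈ Icc i n, f j := by
  simp_rw [mul_sum]
  refine (sum_comm' fun j i => ?_).trans
    (sum_congr rfl fun i _ => sum_congr rfl fun j _ => mul_comm _ _)
  simp only [mem_Icc]
  omega

theorem sum_Icc_eq_of_eq_sub_succ {M : Type*} [AddCommGroup M] {p α : ℕ → M} {i n : ℕ}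
    (hp : ∀ j ∈ Ico i n, p j = α j - α (j + 1)) (hpn : p n = α n) (hin : i ≤ n) :
    ∑ j ∈ Icc i n, p j = α i := by
  rw [← Ico_add_one_right_eq_Icc, sum_Ico_succ_top hin, sum_congr rfl hp, hpn, sum_sub_distrib,
    ← neg_sub, ← sum_sub_distrib, sum_Ico_sub α hin]
  abel

theorem strictMonoOn_sum_Icc_one {h : ℕ → ℝ} {n : ℕ} (hpos : ∀ i ∈ Icc 1 n, 0 < h i) :
    StrictMonoOn (fun k => ∑ i ∈ Icc 1 k, h i) (Set.Iic n) := by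
  intro j _ k hk hjk
  rw [← sub_pos, sum_Icc_one_sub_sum_Icc_one h hjk.le]
  refine sum_pos (fun i hi => hpos i ?_) (nonempty_Icc.2 hjk)
  simp only [mem_Icc, Set.mem_Iic] at hi hk ⊢
  omega

theorem ConvexOn.le_on_segment_of_concaveOn {E : Type*} [AddCommGroup E] [Module ℝ E]
    {s : Set E} {f g : E → ℝ} (hf : ConvexOn ℝ s f) (hg : ConcaveOn ℝ s g) {x y z : E}
    (hx : x ∈ s) (hy : y ∈ s) (hfgx : f x ≤ g x) (hfgy : f y ≤ g y) (hz : z ∈ segment ℝ x y) :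
    f z ≤ g z := by
  have := (hf.sub hg).le_on_segment hx hy hz
  simp only [Pi.sub_apply] at this
  linarith [max_le (sub_nonpos.2 hfgx) (sub_nonpos.2 hfgy)]

section StopLoss

variable {Ω : Type*} [MeasurableSpace Ω] {μ : Measure Ω} {X : Ω → ℝ}

theorem convexOn_stopLoss [IsFiniteMeasure μ] (hX : Integrable X μ) :
    ConvexOn ℝ Set.univ (stopLoss μ X) := by
  have hint (t : ℝ) : Integrable (fun ω => max (X ω - t) 0) μ :=
    (hX.sub (integrable_const t)).pos_part
  have hconv (x : ℝ) : ConvexOn ℝ Set.univ fun t => max (x - t) 0 :=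
    ((convexOn_const x convex_univ).sub (concaveOn_id convex_univ)).sup
      (convexOn_const 0 convex_univ)
  refine ⟨convex_univ, fun s _ t _ a b ha hb hab => ?_⟩
  calc stopLoss μ X (a • s + b • t)
      ≤ ∫ ω, a * max (X ω - s) 0 + b * max (X ω - t) 0 ∂μ :=
        integral_mono (hint _) (((hint s).const_mul a).add ((hint t).const_mul b))
          fun ω => (hconv (X ω)).2 trivial trivial ha hb hab
    _ = a • stopLoss μ X s + b • stopLoss μ X t := by
        rw [integral_add ((hint s).const_mul a) ((hint t).const_mul b), integral_const_mul,
          integral_const_mul]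
        rfl

theorem stopLoss_zero_of_nonneg (hX : ∀ ω, 0 ≤ X ω) : stopLoss μ X 0 = ∫ ω, X ω ∂μ := by
  simp only [stopLoss, sub_zero, max_eq_left (hX _)]

theorem stopLoss_eq_zero_of_le {t : ℝ} (hX : ∀ ω, X ω ≤ t) : stopLoss μ X t = 0 := by
  simp only [stopLoss, max_eq_right (sub_nonpos.2 (hX _)), integral_zero]

theorem integral_comp_eq_sum_of_mem {α : Type*} [MeasurableSpace α] [MeasurableSingletonClass α]
    [IsFiniteMeasure μ] {Y : Ω → α} (hY : Measurable Y) {T : Finset α} (hT : ∀ ω, Y ω ∈ T)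
    (g : α → ℝ) : ∫ ω, g (Y ω) ∂μ = ∑ y ∈ T, μ.real {ω | Y ω = y} * g y := by
  have hset (y : α) : MeasurableSet {ω | Y ω = y} := hY (measurableSet_singleton y)
  have hdecomp :
      (fun ω => g (Y ω)) = fun ω => ∑ y ∈ T, {ω | Y ω = y}.indicator (fun _ => g y) ω := by
    funext ω
    rw [sum_eq_single_of_mem (Y ω) (hT ω), Set.indicator_of_mem (s := {ω' | Y ω' = Y ω}) rfl]
    exact fun y _ hy => Set.indicator_of_notMem (Ne.symm hy) _
  rw [hdecomp, integral_finsetSum _ fun y _ => (integrable_const _).indicator (hset y)]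
  exact sum_congr rfl fun y _ => integral_indicator_const _ (hset y)

theorem stopLoss_eq_discreteStopLoss [IsFiniteMeasure μ] (hX : Measurable X) {H : ℕ → ℝ} {n : ℕ}
    (hH : Set.InjOn H (Set.Iic n)) (hXH : ∀ ω, ∃ k ≤ n, X ω = H k) (t : ℝ) :
    stopLoss μ X t = discreteStopLoss (fun j => μ.real {ω | X ω = H j}) H n t := by
  classical
  have hT (ω : Ω) : X ω ∈ (Finset.Iic n).image H := by
    obtain ⟨k, hk, hXk⟩ := hXH ω
    exact mem_image.2 ⟨k, Finset.mem_Iic.2 hk, hXk.symm⟩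
  exact (integral_comp_eq_sum_of_mem hX hT fun y => max (y - t) 0).trans
    (sum_image (by rwa [coe_Iic]))

end StopLoss

theorem discreteStopLoss_eq_sum_Icc {p H : ℕ → ℝ} {n k : ℕ} {t : ℝ} (hle : ∀ j ≤ k, H j ≤ t)
    (hge : ∀ j ∈ Icc (k + 1) n, t ≤ H j) :
    discreteStopLoss p H n t = ∑ j ∈ Icc (k + 1) n, p j * (H j - t) := by
  rw [discreteStopLoss, ← sum_subset (s₁ := Icc (k + 1) n)]
  · exact sum_congr rfl fun j hj => by rw [max_eq_left (sub_nonneg.2 (hge j hj))]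
  · intro j hj
    simp only [mem_Icc, Finset.mem_Iic] at hj ⊢
    omega
  · intro j hjn hj
    simp only [mem_Icc, Finset.mem_Iic] at hjn hj
    rw [max_eq_right (sub_nonpos.2 (hle j (by omega))), mul_zero]

theorem concaveOn_sum_mul_sub (s : Finset ℕ) (p H : ℕ → ℝ) :
    ConcaveOn ℝ Set.univ fun t => ∑ j ∈ s, p j * (H j - t) := by
  refine ⟨convex_univ, fun x _ y _ a b _ _ hab => le_of_eq ?_⟩
  simp only [smul_eq_mul, mul_sum, ← sum_add_distrib]
  exact sum_congr rfl fun j _ => by linear_combination p j * H j * hab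

theorem discreteStopLoss_eq_sum_mul_tail {p h α H : ℕ → ℝ} {n m : ℕ}
    (hH : ∀ k, H k = ∑ i ∈ Icc 1 k, h i) (hmono : MonotoneOn H (Set.Iic n)) (hm : m ≤ n)
    (htail : ∀ i ∈ Icc (m + 1) n, ∑ j ∈ Icc i n, p j = α i) :
    discreteStopLoss p H n (H m) = ∑ i ∈ Icc (m + 1) n, h i * α i := by
  rw [discreteStopLoss_eq_sum_Icc (k := m)
      (fun j hj => hmono (Set.mem_Iic.2 (hj.trans hm)) hm hj)
      (fun j hj => hmono hm (mem_Icc.1 hj).2 (by rw [mem_Icc] at hj; omega))]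
  calc ∑ j ∈ Icc (m + 1) n, p j * (H j - H m)
      = ∑ j ∈ Icc (m + 1) n, p j * ∑ i ∈ Icc (m + 1) j, h i :=
        sum_congr rfl fun j hj => by
          rw [hH, hH, sum_Icc_one_sub_sum_Icc_one h (by rw [mem_Icc] at hj; omega)]
    _ = ∑ i ∈ Icc (m + 1) n, h i * ∑ j ∈ Icc i n, p j := sum_Icc_mul_sum_Icc_comm p h _ _
    _ = ∑ i ∈ Icc (m + 1) n, h i * α i := sum_congr rfl fun i hi => by rw [htail i hi]

theorem le_discreteStopLoss_of_convexOn {f : ℝ → ℝ} (hf : ConvexOn ℝ Set.univ f)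
    {p H : ℕ → ℝ} {n : ℕ} (hH : MonotoneOn H (Set.Iic n))
    (hgrid : ∀ m ≤ n, f (H m) ≤ discreteStopLoss p H n (H m)) {t : ℝ}
    (ht : t ∈ Set.Icc (H 0) (H n)) : f t ≤ discreteStopLoss p H n t := by
  classical
  set k := Nat.findGreatest (fun j => H j ≤ t) n
  have hkn : k ≤ n := Nat.findGreatest_le n
  have hkt : H k ≤ t := Nat.findGreatest_spec (P := fun j => H j ≤ t) (Nat.zero_le n) ht.1
  rcases hkn.eq_or_lt with hkn | hkn
  · rw [le_antisymm ht.2 (hkn ▸ hkt)]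
    exact hgrid n le_rfl
  have htk : t ≤ H (k + 1) :=
    (not_le.1 (Nat.findGreatest_is_greatest (P := fun j => H j ≤ t) (lt_add_one k) hkn)).le
  have hHk : H k ≤ H (k + 1) := hkt.trans htk
  have hpiece {s : ℝ} (hs : s ∈ Set.Icc (H k) (H (k + 1))) :
      discreteStopLoss p H n s = ∑ j ∈ Icc (k + 1) n, p j * (H j - s) :=
    discreteStopLoss_eq_sum_Icc
      (fun j hj => (hH (Set.mem_Iic.2 (hj.trans hkn.le)) hkn.le hj).trans hs.1)
      (fun j hj => hs.2.trans (hH (Set.mem_Iic.2 hkn) (mem_Icc.1 hj).2 (mem_Icc.1 hj).1))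
  rw [hpiece ⟨hkt, htk⟩]
  refine hf.le_on_segment_of_concaveOn (concaveOn_sum_mul_sub _ p H) trivial trivial ?_ ?_
    (by rw [segment_eq_Icc hHk]; exact ⟨hkt, htk⟩)
  · rw [← hpiece ⟨le_rfl, hHk⟩]
    exact hgrid k hkn.le
  · rw [← hpiece ⟨hHk, le_rfl⟩]
    exact hgrid (k + 1) hkn

theorem stopLoss_le_maximallyConvex_general
    {Ω : Type*} [MeasureSpace Ω] [IsProbabilityMeasure (volume : Measure Ω)]
    (n : ℕ) (h α : ℕ → ℝ)
    (hpos : ∀ i ∈ Finset.Icc 1 n, 0 < h i)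
    (hsum : ∑ i ∈ Finset.Icc 1 n, h i = 1)
    (H : ℕ → ℝ) (hH : ∀ k, H k = ∑ i ∈ Finset.Icc 1 k, h i)
    (S : Ω → ℝ) (hSmeas : Measurable S) (hSb : ∀ ω, S ω ∈ Set.Icc (0:ℝ) 1)
    (hSmean : (∫ ω, S ω) = ∑ k ∈ Finset.Icc 1 n, h k * α k)
    (hSLT : ∀ k ∈ Finset.Icc 1 (n - 1),
      (∫ ω, max (S ω - H k) 0) ≤ ∑ i ∈ Finset.Icc (k + 1) n, h i * α i)
    (Sbar : Ω → ℝ) (hmeas : Measurable Sbar)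
    (hsupp : ∀ ω, ∃ k ≤ n, Sbar ω = H k)
    (hPk : ∀ k ∈ Finset.Icc 1 (n - 1),
      (volume {ω | Sbar ω = H k}).toReal = α k - α (k + 1))
    (hPn : (volume {ω | Sbar ω = 1}).toReal = α n) :
    ∀ t ∈ Set.Icc (0:ℝ) 1,
      (∫ ω, max (S ω - t) 0) ≤ ∫ ω, max (Sbar ω - t) 0 := by
  intro t ht
  have hHmono : StrictMonoOn H (Set.Iic n) := by
    rw [funext hH]
    exact strictMonoOn_sum_Icc_one hpos
  have hH0 : H 0 = 0 := by simp [hH]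
  have hHn : H n = 1 := (hH n).trans hsum
  have hSint : Integrable S := .of_bound hSmeas.aestronglyMeasurable 1
    (.of_forall fun ω => abs_le.2 ⟨by linarith [(hSb ω).1], (hSb ω).2⟩)
  have hSgrid (m : ℕ) (hm : m ≤ n) :
      stopLoss volume S (H m) ≤ ∑ i ∈ Icc (m + 1) n, h i * α i := by
    rcases Nat.eq_zero_or_pos m with rfl | hm0
    · rw [hH0, stopLoss_zero_of_nonneg fun ω => (hSb ω).1, zero_add, hSmean]
    rcases hm.lt_or_eq with hmn | rfl
    · exact hSLT m (mem_Icc.2 ⟨hm0, by omega⟩)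
    · rw [hHn, stopLoss_eq_zero_of_le fun ω => (hSb ω).2, Icc_eq_empty (by omega), sum_empty]
  have htail (i : ℕ) (hi : i ∈ Icc 1 n) :
      ∑ j ∈ Icc i n, volume.real {ω | Sbar ω = H j} = α i :=
    sum_Icc_eq_of_eq_sub_succ
      (fun j hj => hPk j (by simp only [mem_Icc, mem_Ico] at hi hj ⊢; omega))
      (by rwa [hHn]) (mem_Icc.1 hi).2
  show stopLoss volume S t ≤ stopLoss volume Sbar t
  rw [stopLoss_eq_discreteStopLoss hmeas hHmono.injOn hsupp]
  refine le_discreteStopLoss_of_convexOn (convexOn_stopLoss hSint) hHmono.monotoneOn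
    (fun m hm => ?_) (by rwa [hH0, hHn])
  rw [discreteStopLoss_eq_sum_mul_tail hH hHmono.monotoneOn hm
    fun i hi => htail i (by simp only [mem_Icc] at hi ⊢; omega)]
  exact hSgrid m hm

/-- If `S` is `[0,1]`-valued with `E[S] = Σ h_k α_k` and its stop-loss transform
satisfies `π_S(H_k) ≤ Σ_{i>k} h_i α_i` for `k = 1,…,n−1`, then `π_S(t) ≤ π_{S̄}(t)`
for all `t ∈ [0,1]`, i.e. `S` precedes the maximally convex distribution `S̄` in
the convex order. -/
theorem stopLoss_le_maximallyConvex
    {Ω : Type*} [MeasureSpace Ω] [IsProbabilityMeasure (volume : Measure Ω)]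
    (n : ℕ) (hn : 1 ≤ n) (h α : ℕ → ℝ)
    (hpos : ∀ i ∈ Finset.Icc 1 n, 0 < h i)
    (hsum : ∑ i ∈ Finset.Icc 1 n, h i = 1)
    (hαmem : ∀ i ∈ Finset.Icc 1 n, α i ∈ Set.Ioc (0:ℝ) 1)
    (hαdec : ∀ i ∈ Finset.Icc 1 (n - 1), α (i + 1) < α i)
    (H : ℕ → ℝ) (hH : ∀ k, H k = ∑ i ∈ Finset.Icc 1 k, h i)
    (S : Ω → ℝ) (hSmeas : Measurable S) (hSb : ∀ ω, S ω ∈ Set.Icc (0:ℝ) 1)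
    (hSmean : (∫ ω, S ω) = ∑ k ∈ Finset.Icc 1 n, h k * α k)
    (hSLT : ∀ k ∈ Finset.Icc 1 (n - 1),
      (∫ ω, max (S ω - H k) 0) ≤ ∑ i ∈ Finset.Icc (k + 1) n, h i * α i)
    (Sbar : Ω → ℝ) (hmeas : Measurable Sbar)
    (hsupp : ∀ ω, ∃ k ≤ n, Sbar ω = H k)
    (hP0 : (volume {ω | Sbar ω = 0}).toReal = 1 - α 1)
    (hPk : ∀ k ∈ Finset.Icc 1 (n - 1),
      (volume {ω | Sbar ω = H k}).toReal = α k - α (k + 1))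
    (hPn : (volume {ω | Sbar ω = 1}).toReal = α n) :
    ∀ t ∈ Set.Icc (0:ℝ) 1,
      (∫ ω, max (S ω - t) 0) ≤ ∫ ω, max (Sbar ω - t) 0 :=
  stopLoss_le_maximallyConvex_general n h α hpos hsum H hH S hSmeas hSb hSmean hSLT Sbar hmeas hsupp
    hPk hPn
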